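/- Let N be a finite set, F = {f_v : 2^{N\{v}} → ℕ | v ∈ N} local scores, and suppose A ⊆ N × N is such that (N,A) is a DAG with Σ_{v∈N} f_v(P_v^A) ≥ t and Mo((N,A)) belongs to a monotone graph class Π' (closed under vertex and edge deletions). Then the arc set A' obtained from A by removing all incoming arcs of every vertex v with f_v(P_v^A) = 0 satisfies: (N,A') is a DAG, Σ_{v∈N} f_v(P_v^{A'}) ≥ t, Mo((N,A')) ∈ Π', and for every v, f_v(P_v^{A'}) = 0 implies P_v^{A'} = ∅. -/

import Mathlib

open scoped Classical

variable {V : Type*}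

/-- The arc relation of an arc set. -/
def arcRel (A : Set (V × V)) : V → V → Prop := fun u v => (u, v) ∈ A

/-- `(N, A)` is a directed acyclic graph: no directed cycles. -/
def IsDAG (A : Set (V × V)) : Prop := ∀ v : V, ¬ Relation.TransGen (arcRel A) v v

/-- Parent set of `v` under arc set `A`. -/
def parents (A : Set (V × V)) (v : V) : Set V := {u | (u, v) ∈ A}

/-- `w` is a descendant of `v`: there is a (nonempty) directed path from `v` to `w`. -/
def Descends (A : Set (V × V)) (v w : V) : Prop := Relation.TransGen (arcRel A) v w

/-- The moralized graph of `(N, A)`: edges between adjacent vertices and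
between vertices with a common child. -/
def Mo (A : Set (V × V)) : SimpleGraph V where
  Adj u v := u ≠ v ∧ ((u, v) ∈ A ∨ (v, u) ∈ A ∨ ∃ w, (u, w) ∈ A ∧ (v, w) ∈ A)
  symm := by
    refine ⟨?_⟩
    intro u v h
    obtain ⟨hne, h⟩ := h
    refine ⟨hne.symm, ?_⟩
    rcases h with h | h | ⟨w, h1, h2⟩
    · exact Or.inr (Or.inl h)
    · exact Or.inl h
    · exact Or.inr (Or.inr ⟨w, h2, h1⟩)
  loopless := ⟨fun v h => h.1 rfl⟩

/-- `S` is a dissociation set of `G`: `G − S` has maximum degree at most one. -/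
def IsDissoc (G : SimpleGraph V) (S : Set V) : Prop :=
  ∀ v ∉ S, {w | w ∉ S ∧ G.Adj v w}.ncard ≤ 1

theorem IsDAG.mono {A B : Set (V × V)} (hBA : B ⊆ A) (hA : IsDAG A) : IsDAG B :=
  fun v hv => hA v (Relation.TransGen.mono (fun _ _ huv => hBA huv) v v hv)

theorem Mo_mono : Monotone (Mo (V := V)) := by
  rintro B A hBA u v ⟨hne, huv | hvu | ⟨w, huw, hvw⟩⟩
  · exact ⟨hne, .inl (hBA huv)⟩
  · exact ⟨hne, .inr (.inl (hBA hvu))⟩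
  · exact ⟨hne, .inr (.inr ⟨w, hBA huw, hBA hvw⟩)⟩

section HeadFilter

variable (A : Set (V × V)) (P : V → Prop) (v : V)

theorem parents_sep_head_of_pos (hv : P v) : parents {p ∈ A | P p.2} v = parents A v :=
  Set.ext fun _ => ⟨And.left, fun hu => ⟨hu, hv⟩⟩

theorem parents_sep_head_of_neg (hv : ¬ P v) : parents {p ∈ A | P p.2} v = ∅ :=
  Set.eq_empty_of_forall_notMem fun _ hu => hv hu.2

end HeadFilter

/-- Removing all incoming arcs of vertices with score `0` preserves being a DAG,
the total score, and membership of the moralized graph in a monotone class, and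
afterwards every vertex with score `0` has an empty parent set. -/
theorem stmt_19 [Fintype V] (f : V → Set V → ℕ) (A : Set (V × V)) (t : ℕ)
    (Pi : Set (SimpleGraph V))
    (hmono : ∀ G H : SimpleGraph V, H ≤ G → G ∈ Pi → H ∈ Pi)
    (hdag : IsDAG A) (hscore : t ≤ ∑ v : V, f v (parents A v))
    (hPi : Mo A ∈ Pi) :
    IsDAG {p ∈ A | f p.2 (parents A p.2) ≠ 0} ∧
    t ≤ ∑ v : V, f v (parents {p ∈ A | f p.2 (parents A p.2) ≠ 0} v) ∧
    Mo {p ∈ A | f p.2 (parents A p.2) ≠ 0} ∈ Pi ∧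
    ∀ v : V, f v (parents {p ∈ A | f p.2 (parents A p.2) ≠ 0} v) = 0 →
      parents {p ∈ A | f p.2 (parents A p.2) ≠ 0} v = ∅ := by
  have hsub := Set.sep_subset A fun p => f p.2 (parents A p.2) ≠ 0
  have hpos := parents_sep_head_of_pos A fun w => f w (parents A w) ≠ 0
  have hneg := parents_sep_head_of_neg A fun w => f w (parents A w) ≠ 0
  refine ⟨hdag.mono hsub, ?_, hmono _ _ (Mo_mono hsub) hPi, fun v hv => ?_⟩
  · refine hscore.trans (Finset.sum_le_sum fun v _ => ?_)
    by_cases hzero : f v (parents A v) = 0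
    · rw [hzero]
      exact Nat.zero_le _
    · rw [hpos v hzero]
  · by_cases hzero : f v (parents A v) = 0
    · exact hneg v (not_not.mpr hzero)
    · rw [hpos v hzero] at hv
      exact absurd hv hzero
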